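/- arXiv:1711.07239 — 3 statements merged into one kernel-verified Lean document; each statement's English description precedes it below -/
import Mathlib

section
/- Let k be a field, P = k[x_1,...,x_n] a polynomial ring, f_1,...,f_s ∈ P homogeneous polynomials of degree ≥ 2, and R = P/(f_1,...,f_s). If for some q ≥ 1 there exists a surjective R-module homomorphism from the q-th symmetric power Sym^q_R(Ω_{R/k}) onto R, then there exists a surjective R-module homomorphism from Ω_{R/k} onto R. -/
open scoped TensorProduct
open PiTensorProduct

/-- The submodule of relations defining the `q`-th symmetric power. -/
def symRel (R M : Type*) [CommRing R] [AddCommGroup M] [Module R M] (q : ℕ) :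
    Submodule R (⨂[R]^q M) :=
  Submodule.span R {x | ∃ (σ : Equiv.Perm (Fin q)) (v : Fin q → M),
    x = PiTensorProduct.tprod R v - PiTensorProduct.tprod R (v ∘ σ)}

/-- The `q`-th symmetric power of a module, as a quotient of the `q`-th tensor power. -/
abbrev SymPow (R M : Type*) [CommRing R] [AddCommGroup M] [Module R M] (q : ℕ) :=
  (⨂[R]^q M) ⧸ symRel R M q

/-!
Let `ε : R → k` be evaluation at the origin. If `Sym^q Ω → R` is onto with `q ≥ 1`, some linear
form `L : Ω → R` takes a value outside `ker ε` on some `dxⱼ`: otherwise every pure tensor, hence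
everything, would land in `ker ε`. Applying `L` to `d fᵢ = 0` gives `∑ⱼ ∂ⱼfᵢ · L(dxⱼ) = 0`, and
since the `∂ⱼfᵢ` are forms of one degree, the lowest-degree part of this relation (read off through
the scaling `xᵢ ↦ T xᵢ`) says that the constants `bⱼ = ε(L(dxⱼ))` satisfy `∑ⱼ bⱼ ∂ⱼfᵢ = 0` in `R`.
So `∑ⱼ bⱼ ∂/∂xⱼ` descends to a derivation of `R`, and the induced map `Ω → R` sends `dxⱼ` to
the unit `bⱼ`.
-/

open MvPolynomial
open KaehlerDifferential (D)

namespace MvPolynomial.IsHomogeneous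

variable {σ k A : Type*} [CommRing k] [CommRing A] [Algebra k A] {p : MvPolynomial σ k} {t : ℕ}

theorem aeval_mul_left (hp : p.IsHomogeneous t) (r : A) (v : σ → A) :
    MvPolynomial.aeval (fun i => r * v i) p = r ^ t * MvPolynomial.aeval v p := by
  conv_lhs => rw [p.as_sum]
  conv_rhs => rw [p.as_sum]
  simp only [map_sum, Finset.mul_sum, aeval_monomial, Finsupp.prod, mul_pow,
    Finset.prod_mul_distrib, Finset.prod_pow_eq_pow_sum]
  refine Finset.sum_congr rfl fun s hs => ?_
  have hs : s.degree = t := by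
    by_contra hne
    exact mem_support_iff.mp hs (hp.coeff_eq_zero hne)
  rw [← hs, Finsupp.degree_apply]
  ring

theorem aeval_X_mul_C (hp : p.IsHomogeneous t) (π : MvPolynomial σ k →ₐ[k] A) :
    MvPolynomial.aeval (fun i => Polynomial.X * Polynomial.C (π (X i))) p =
      Polynomial.X ^ t * Polynomial.C (π p) := by
  rw [hp.aeval_mul_left]
  congr 1
  conv_rhs => rw [π.ext_iff.mp (MvPolynomial.aeval_unique π) p]
  exact (comp_aeval_apply _ ((Polynomial.CAlgHom (R := A) (A := A)).restrictScalars k) p).symm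

theorem constantCoeff_eq_zero (hp : p.IsHomogeneous t) (ht : t ≠ 0) : constantCoeff p = 0 := by
  rw [constantCoeff_eq]
  exact hp.coeff_eq_zero (by simpa using ht.symm)

end MvPolynomial.IsHomogeneous

theorem Derivation.apply_algHom_eq_sum_pderiv {k σ A M : Type*} [CommRing k] [CommRing A]
    [Algebra k A] [Fintype σ] [AddCommGroup M] [Module A M] [Module k M] [IsScalarTower k A M]
    (δ : Derivation k A M) (π : MvPolynomial σ k →ₐ[k] A) (p : MvPolynomial σ k) :
    δ (π p) = ∑ j, π (pderiv j p) • δ (π (X j)) := by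
  classical
  induction p using MvPolynomial.induction_on with
  | C a => simp
  | add p p' hp hp' => simp only [map_add, hp, hp', add_smul, Finset.sum_add_distrib]
  | mul_X p i hp =>
    rw [map_mul, δ.leibniz, hp]
    simp only [pderiv_mul, map_add, add_smul, Finset.sum_add_distrib, pderiv_X, map_mul,
      Finset.smul_sum, smul_smul]
    simp [Pi.single_apply, add_comm, mul_comm]

theorem exists_linearMap_apply_notMem {R M κ : Type*} [CommRing R] [AddCommGroup M]
    [Module R M] {J : Ideal R} (hJ : J ≠ ⊤) {q : ℕ} (hq : q ≠ 0)
    {φ : (⨂[R]^q M) →ₗ[R] R} (hφ : Function.Surjective φ) {g : κ → M}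
    (hg : Submodule.span R (Set.range g) = ⊤) :
    ∃ L : M →ₗ[R] R, ∃ j, L (g j) ∉ J := by
  by_contra! hgJ
  have hLJ : ∀ (L : M →ₗ[R] R) m, L m ∈ J := fun L m => by
    have : Submodule.span R (Set.range g) ≤ Submodule.comap L J :=
      Submodule.span_le.mpr (Set.range_subset_iff.mpr (hgJ L))
    exact this (hg ▸ Submodule.mem_top)
  have hφJ : ∀ x, φ x ∈ J := fun x => by
    have : Submodule.span R (Set.range (PiTensorProduct.tprod R)) ≤ Submodule.comap φ J := by
      refine Submodule.span_le.mpr (Set.range_subset_iff.mpr fun v => ?_)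
      let i₀ : Fin q := ⟨0, Nat.pos_of_ne_zero hq⟩
      simpa using hLJ (φ ∘ₗ (PiTensorProduct.tprod R).toLinearMap v i₀) (v i₀)
    exact this (by rw [span_tprod_eq_top]; exact Submodule.mem_top)
  obtain ⟨x, hx⟩ := hφ 1
  exact hJ ((Ideal.eq_top_iff_one J).mpr (hx ▸ hφJ x))

section HomogeneousQuotient

variable {k σ ι R : Type*} [CommRing k] [CommRing R] [Algebra k R]
  {π : MvPolynomial σ k →ₐ[k] R} {f : ι → MvPolynomial σ k} {d : ι → ℕ}

theorem exists_augmentation (hπ : Function.Surjective π)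
    (hker : RingHom.ker π = Ideal.span (Set.range f))
    (hhom : ∀ i, (f i).IsHomogeneous (d i)) (hd : ∀ i, d i ≠ 0) :
    ∃ ε : R →ₐ[k] k, ∀ p, ε (π p) = constantCoeff p := by
  have H : RingHom.ker π.toRingHom ≤
      RingHom.ker (MvPolynomial.aeval 0 : MvPolynomial σ k →ₐ[k] k).toRingHom := by
    change RingHom.ker π ≤ _
    rw [hker, Ideal.span_le]
    rintro _ ⟨i, rfl⟩
    simp [(hhom i).constantCoeff_eq_zero (hd i)]
  exact ⟨π.liftOfSurjective hπ _ H, fun p => by simp [aeval_zero]⟩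

theorem exists_scaling (hπ : Function.Surjective π)
    (hker : RingHom.ker π = Ideal.span (Set.range f))
    (hhom : ∀ i, (f i).IsHomogeneous (d i)) :
    ∃ S : R →ₐ[k] Polynomial R,
      ∀ p, S (π p) = aeval (fun i => Polynomial.X * Polynomial.C (π (X i))) p := by
  have H : RingHom.ker π.toRingHom ≤ RingHom.ker
      (aeval fun i => Polynomial.X * Polynomial.C (π (X i))).toRingHom := by
    change RingHom.ker π ≤ _
    rw [hker, Ideal.span_le]
    rintro _ ⟨i, rfl⟩
    have hfi : π (f i) = 0 := RingHom.mem_ker.mp (hker ▸ Ideal.subset_span ⟨i, rfl⟩)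
    change MvPolynomial.aeval _ (f i) = 0
    rw [(hhom i).aeval_X_mul_C, hfi, map_zero, mul_zero]
  exact ⟨π.liftOfSurjective hπ _ H, fun p => by simp⟩

theorem sum_augmentation_smul_eq_zero (hπ : Function.Surjective π)
    (hker : RingHom.ker π = Ideal.span (Set.range f))
    (hhom : ∀ i, (f i).IsHomogeneous (d i))
    {ε : R →ₐ[k] k} (hε : ∀ p, ε (π p) = constantCoeff p)
    {κ : Type*} [Fintype κ] {g : κ → MvPolynomial σ k} {t : ℕ} (hg : ∀ j, (g j).IsHomogeneous t)
    {c : κ → R} (h : ∑ j, π (g j) * c j = 0) :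
    ∑ j, ε (c j) • π (g j) = 0 := by
  obtain ⟨S, hS⟩ := exists_scaling hπ hker hhom
  have hS0 : ∀ r, (S r).coeff 0 = algebraMap k R (ε r) := by
    suffices ((Polynomial.aeval (0 : R)).restrictScalars k).comp S =
        (Algebra.ofId k R).comp ε by
      intro r
      simpa [Polynomial.coeff_zero_eq_aeval_zero] using congr($this r)
    refine (AlgHom.cancel_right hπ).mp (MvPolynomial.algHom_ext fun i => ?_)
    simp [hS, hε]
  have key := congr(($(congrArg S h)).coeff t)
  simp only [map_sum, map_mul, hS, (hg _).aeval_X_mul_C, map_zero, Polynomial.finsetSum_coeff,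
    mul_assoc, Polynomial.coeff_X_pow_mul', le_refl, if_true, tsub_self, Polynomial.coeff_C_mul,
    hS0, Polynomial.coeff_zero] at key
  simpa only [Algebra.smul_def, mul_comm] using key

variable [Fintype σ]

theorem exists_derivation_apply_X (hπ : Function.Surjective π)
    (hker : RingHom.ker π = Ideal.span (Set.range f))
    (b : σ → k) (hb : ∀ i, ∑ j, b j • π (pderiv j (f i)) = 0) :
    ∃ D : Derivation k R R, ∀ j, D (π (X j)) = algebraMap k R (b j) := by
  let δ : Derivation k (MvPolynomial σ k) (MvPolynomial σ k) := ∑ j, b j • pderiv j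
  have hδ : ∀ p, π (δ p) = ∑ j, b j • π (pderiv j p) := fun p => by
    change π (Derivation.coeFnAddMonoidHom (∑ j, b j • pderiv j) p) = _
    simp [map_sum, Finset.sum_apply, Derivation.coeFnAddMonoidHom_apply]
  have hvanish : ∀ x, π x = 0 → π (δ x) = 0 := by
    intro x hx
    rw [← RingHom.mem_ker, hker] at hx
    induction hx using Submodule.span_induction with
    | mem x hx => obtain ⟨i, rfl⟩ := hx; rw [hδ]; exact hb i
    | zero => simp
    | add x y _ _ hx hy => simp [hx, hy]
    | smul r x hxI hx =>
      have hπx : π x = 0 := RingHom.mem_ker.mp (hker ▸ hxI)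
      simp [δ.leibniz, hx, hπx]
  refine ⟨Derivation.liftOfSurjective hπ hvanish, fun j => ?_⟩
  rw [Derivation.liftOfSurjective_apply, hδ, Finset.sum_eq_single j
    (fun i _ hij => by rw [pderiv_X_of_ne hij.symm, map_zero, smul_zero]) (by simp),
    pderiv_X_self, map_one, Algebra.smul_def, mul_one]

theorem KaehlerDifferential.span_range_D_X_eq_top (hπ : Function.Surjective π) :
    Submodule.span R (Set.range fun j => D k R (π (X j))) = ⊤ := by
  rw [eq_top_iff, ← KaehlerDifferential.span_range_derivation, Submodule.span_le]
  rintro _ ⟨r, rfl⟩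
  obtain ⟨p, rfl⟩ := hπ r
  rw [(D k R).apply_algHom_eq_sum_pderiv]
  exact Submodule.sum_mem _ fun j _ => Submodule.smul_mem _ _ (Submodule.subset_span ⟨j, rfl⟩)

theorem exists_linearMap_apply_D_X_eq_augmentation (hπ : Function.Surjective π)
    (hker : RingHom.ker π = Ideal.span (Set.range f))
    (hhom : ∀ i, (f i).IsHomogeneous (d i))
    {ε : R →ₐ[k] k} (hε : ∀ p, ε (π p) = constantCoeff p) (L : Ω[R⁄k] →ₗ[R] R) :
    ∃ ψ : Ω[R⁄k] →ₗ[R] R,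
      ∀ j, ψ (D k R (π (X j))) = algebraMap k R (ε (L (D k R (π (X j))))) := by
  have hrel : ∀ i, ∑ j, π (pderiv j (f i)) * L (D k R (π (X j))) = 0 := by
    intro i
    have hfi : π (f i) = 0 := RingHom.mem_ker.mp (hker ▸ Ideal.subset_span ⟨i, rfl⟩)
    have h0 : L (D k R (π (f i))) = 0 := by rw [hfi, map_zero, map_zero]
    rw [(D k R).apply_algHom_eq_sum_pderiv, map_sum] at h0
    simpa only [map_smul, smul_eq_mul] using h0
  obtain ⟨D', hD'⟩ := exists_derivation_apply_X hπ hker _ fun i =>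
    sum_augmentation_smul_eq_zero hπ hker hhom hε (fun j => (hhom i).pderiv) (hrel i)
  refine ⟨D'.liftKaehlerDifferential, fun j => ?_⟩
  rw [Derivation.liftKaehlerDifferential_comp_D, hD']

end HomogeneousQuotient

/-- For `R = k[x₁,…,xₙ]/(f₁,…,f_s)` with the `fᵢ` homogeneous of
degree `≥ 2`, a surjection `Sym^q(Ω_{R/k}) ↠ R` for some `q ≥ 1` yields a
surjection `Ω_{R/k} ↠ R`. -/
theorem stmt3 {k : Type*} [Field k] {n s : ℕ}
    (f : Fin s → MvPolynomial (Fin n) k) (d : Fin s → ℕ)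
    (hd : ∀ i, 2 ≤ d i) (hhom : ∀ i, (f i).IsHomogeneous (d i))
    (R : Type*) [CommRing R] [Algebra k R]
    (e : (MvPolynomial (Fin n) k ⧸ Ideal.span (Set.range f)) ≃ₐ[k] R)
    (q : ℕ) (hq : 1 ≤ q)
    (h : ∃ φ : SymPow R (Ω[R⁄k]) q →ₗ[R] R, Function.Surjective φ) :
    ∃ ψ : Ω[R⁄k] →ₗ[R] R, Function.Surjective ψ := by
  obtain ⟨φ, hφ⟩ := h
  let π := e.toAlgHom.comp (Ideal.Quotient.mkₐ k (Ideal.span (Set.range f)))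
  have hπ : Function.Surjective π := e.surjective.comp (Ideal.Quotient.mkₐ_surjective k _)
  have hker : RingHom.ker π = Ideal.span (Set.range f) := by
    ext x
    simp [π, Ideal.Quotient.eq_zero_iff_mem]
  obtain ⟨ε, hε⟩ := exists_augmentation hπ hker hhom fun i => by have := hd i; omega
  obtain ⟨L, j, hj⟩ := exists_linearMap_apply_notMem (RingHom.ker_ne_top ε) (by omega : q ≠ 0)
    (φ := φ ∘ₗ Submodule.mkQ _) (hφ.comp (Submodule.mkQ_surjective _))
    (KaehlerDifferential.span_range_D_X_eq_top hπ)
  obtain ⟨ψ, hψ⟩ := exists_linearMap_apply_D_X_eq_augmentation hπ hker hhom hε L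
  refine ⟨ψ, LinearMap.range_eq_top.mp (Ideal.eq_top_of_isUnit_mem _ ⟨_, hψ j⟩ ?_)⟩
  exact (Ne.isUnit (RingHom.mem_ker.not.mp hj)).map (algebraMap k R)
end

section
/- Let k be a field and R = k[x_1,...,x_n]/(f_1,...,f_s) with f_1,...,f_s polynomials. Then there exists a surjective R-module homomorphism Ω_{R/k} → R if and only if some column of the Jacobian matrix (∂f_i/∂x_j), viewed with entries in R, is an R-linear combination of the other columns, where additionally the coefficients together with −1 generate the unit ideal (equivalently, for graded R with homogeneous coefficients, literally one column is an R-combination of the others). -/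
/-!
A linear map `Ω_{R/k} → R` is the same as a `k`-derivation `D` of `R`, and such a `D` is determined
by the values `uⱼ = D(xⱼ)`, which can be prescribed freely subject only to `D(fᵢ) = 0`, i.e.
`∑ⱼ uⱼ ∂fᵢ/∂xⱼ = 0` (lift `D` to the derivation `∑ⱼ vⱼ ∂/∂xⱼ` of the polynomial ring, where
`vⱼ` lifts `uⱼ`; it preserves the ideal `(f)`). Since the `dxⱼ` generate `Ω_{R/k}`, the map is
surjective iff its values `uⱼ` on them generate the unit ideal.
-/

open MvPolynomial

section

variable {k σ R : Type*} [CommRing k] [Fintype σ] [CommRing R] [Algebra k R]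

theorem Derivation.map_algHom_eq_sum_pderiv {M : Type*} [AddCommGroup M] [Module R M] [Module k M]
    [IsScalarTower k R M] (D : Derivation k R M) (π : MvPolynomial σ k →ₐ[k] R)
    (p : MvPolynomial σ k) :
    D (π p) = ∑ j, π (pderiv j p) • D (π (X j)) := by
  classical
  induction p using MvPolynomial.induction_on with
  | C a => simp
  | add p q hp hq => simp only [map_add, hp, hq, add_smul, Finset.sum_add_distrib]
  | mul_X p i hp =>
    simp [Derivation.leibniz, hp, pderiv_X, Pi.single_apply, add_smul, mul_smul,
      Finset.sum_add_distrib, Finset.smul_sum, apply_ite π, ite_smul]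

theorem Derivation.map_mem_span {A : Type*} [CommRing A] [Algebra k A] (d : Derivation k A A)
    {S : Set A} (hS : ∀ s ∈ S, d s ∈ Ideal.span S) {x : A} (hx : x ∈ Ideal.span S) :
    d x ∈ Ideal.span S := by
  induction hx using Submodule.span_induction with
  | mem s hs => exact hS s hs
  | zero => simp
  | add x y _ _ hx hy => simpa using add_mem hx hy
  | smul a x hx' hx =>
    rw [smul_eq_mul, Derivation.leibniz]
    exact add_mem (Ideal.mul_mem_left _ _ hx) (Ideal.mul_mem_right _ _ hx')

theorem KaehlerDifferential.span_range_D_algHom_X {π : MvPolynomial σ k →ₐ[k] R}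
    (hπ : Function.Surjective π) :
    Submodule.span R (Set.range fun j => D k R (π (X j))) = ⊤ := by
  rw [eq_top_iff, ← KaehlerDifferential.span_range_derivation, Submodule.span_le]
  rintro _ ⟨r, rfl⟩
  obtain ⟨p, rfl⟩ := hπ r
  rw [(D k R).map_algHom_eq_sum_pderiv π p]
  exact Submodule.sum_mem _ fun j _ => Submodule.smul_mem _ _ (Submodule.subset_span ⟨j, rfl⟩)

theorem LinearMap.surjective_iff_span_range_comp_eq_top {S M ι : Type*} [CommRing S]
    [AddCommGroup M] [Module S M] {g : ι → M} (hg : Submodule.span S (Set.range g) = ⊤)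
    (φ : M →ₗ[S] S) :
    Function.Surjective φ ↔ Ideal.span (Set.range (φ ∘ g)) = ⊤ := by
  rw [← LinearMap.range_eq_top, LinearMap.range_eq_map, ← hg, Submodule.map_span,
    ← Set.range_comp]

theorem exists_surjective_kaehler_iff_exists_derivation {π : MvPolynomial σ k →ₐ[k] R}
    (hπ : Function.Surjective π) :
    (∃ φ : Ω[R⁄k] →ₗ[R] R, Function.Surjective φ) ↔
      ∃ D : Derivation k R R, Ideal.span (Set.range fun j => D (π (X j))) = ⊤ := by
  simp_rw [LinearMap.surjective_iff_span_range_comp_eq_top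
    (KaehlerDifferential.span_range_D_algHom_X hπ)]
  constructor
  · rintro ⟨φ, hφ⟩
    exact ⟨φ.compDer (KaehlerDifferential.D k R), hφ⟩
  · rintro ⟨D', hD'⟩
    refine ⟨D'.liftKaehlerDifferential, ?_⟩
    simpa [Function.comp_def] using hD'

theorem exists_derivation_map_X_iff {ι : Type*} {f : ι → MvPolynomial σ k}
    {π : MvPolynomial σ k →ₐ[k] R} (hπ : Function.Surjective π)
    (hker : RingHom.ker π = Ideal.span (Set.range f)) (u : σ → R) :
    (∃ D : Derivation k R R, ∀ j, D (π (X j)) = u j) ↔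
      ∀ i, ∑ j, u j * π (pderiv j (f i)) = 0 := by
  constructor
  · rintro ⟨D, hD⟩ i
    have hfi : π (f i) = 0 := by
      rw [← RingHom.mem_ker, hker]
      exact Ideal.subset_span ⟨i, rfl⟩
    have hchain := D.map_algHom_eq_sum_pderiv π (f i)
    simp only [hfi, map_zero, hD, smul_eq_mul] at hchain
    simpa only [mul_comm] using hchain.symm
  · intro hu
    choose v hv using fun j => hπ (u j)
    let d : Derivation k (MvPolynomial σ k) (MvPolynomial σ k) := mkDerivation k v
    have hπd : ∀ x, π (d x) = ∑ j, u j * π (pderiv j x) := fun x => by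
      have hdx := d.map_algHom_eq_sum_pderiv (AlgHom.id k _) x
      simp only [AlgHom.id_apply] at hdx
      simp [hdx, d, hv, mul_comm]
    have hd : ∀ x, π x = 0 → π (d x) = 0 := by
      simp_rw [← RingHom.mem_ker, hker]
      refine fun x hx => d.map_mem_span ?_ hx
      rintro _ ⟨i, rfl⟩
      rw [← hker, RingHom.mem_ker, hπd, hu]
    refine ⟨Derivation.liftOfSurjective hπ hd, fun j => ?_⟩
    simp [d, hv]

end

variable {k : Type*} [Field k] {n s : ℕ}

/-- For `R = k[x₁,…,xₙ]/(f₁,…,f_s)`, there is a surjection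
`Ω_{R/k} ↠ R` iff there is a relation `u` among the columns of the Jacobian
matrix (i.e. `Σⱼ uⱼ ∂fᵢ/∂xⱼ = 0` in `R` for all `i`) whose coefficients
generate the unit ideal — equivalently (as when one coefficient is `−1`), some
column of the Jacobian matrix is an `R`-linear combination of the others. -/
theorem stmt4 (f : Fin s → MvPolynomial (Fin n) k)
    (R : Type*) [CommRing R] [Algebra k R]
    (e : (MvPolynomial (Fin n) k ⧸ Ideal.span (Set.range f)) ≃ₐ[k] R) :
    (∃ φ : Ω[R⁄k] →ₗ[R] R, Function.Surjective φ) ↔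
      (∃ u : Fin n → R,
        (∀ i : Fin s, ∑ j : Fin n,
          u j * e (Ideal.Quotient.mk _ (MvPolynomial.pderiv j (f i))) = 0) ∧
        Ideal.span (Set.range u) = ⊤) := by
  let π : MvPolynomial (Fin n) k →ₐ[k] R := e.toAlgHom.comp (Ideal.Quotient.mkₐ k _)
  have hπ : Function.Surjective π := e.surjective.comp Ideal.Quotient.mk_surjective
  have hker : RingHom.ker π = Ideal.span (Set.range f) := by
    ext x
    simp [π, RingHom.mem_ker, Ideal.Quotient.eq_zero_iff_mem]
  rw [exists_surjective_kaehler_iff_exists_derivation hπ]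
  constructor
  · rintro ⟨D, hD⟩
    exact ⟨_, (exists_derivation_map_X_iff hπ hker _).1 ⟨D, fun _ => rfl⟩, hD⟩
  · rintro ⟨u, hu, hspan⟩
    obtain ⟨D, hD⟩ := (exists_derivation_map_X_iff hπ hker u).2 hu
    exact ⟨D, by simpa only [hD] using hspan⟩
end

section
/- Let k be a field, n ≥ 4, f ∈ k[x_1,...,x_n] homogeneous of degree d ≥ 2 with d invertible in k, such that R = k[x_1,...,x_n]/(f) is a domain with an isolated singularity at the origin. Then for every q ≥ 1 there is no surjective R-module homomorphism from Sym^q_R(Ω_{R/k}) onto R, i.e. the free rank of every symmetric power of the Kähler differentials is zero. -/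
open scoped TensorProduct
open MvPolynomial

/-!
A linear form `ψ` on `Ω[R⁄k]` is determined by the values `yᵢ = ψ (d xᵢ)`, which satisfy
`∑ ∂ᵢf · yᵢ = 0`. Lifting the `yᵢ` to `k[x]` and working modulo `(x)^d`, their constant terms give a
`k`-linear relation among the partials `∂ᵢf`. The partials are linearly independent: otherwise
`n - 1` of them would, by Euler's identity, generate the ideal `(f, ∂₁f, …, ∂ₙf)`, whose radical is
`(x₁, …, xₙ)` of height `n`, contradicting Krull's height theorem. Hence every linear form on `Ω`
takes values in the homogeneous maximal ideal `𝔪` of `R`. A linear form on `⨂^q Ω` with `q ≥ 1`,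
restricted to one tensor slot, is a linear form on `Ω`, so its image lies in `𝔪 ≠ R` as well.
-/

namespace MvPolynomial

variable {σ R A : Type*} [CommRing R] [CommRing A] [Algebra R A]

section idealOfVars

theorem mem_idealOfVars_iff {p : MvPolynomial σ R} :
    p ∈ idealOfVars σ R ↔ constantCoeff p = 0 := by
  rw [← pow_one (idealOfVars σ R), mem_pow_idealOfVars_iff']
  simp [Finsupp.degree_eq_zero_iff, constantCoeff_eq]

theorem idealOfVars_eq_ker_constantCoeff :
    idealOfVars σ R = RingHom.ker (constantCoeff (σ := σ) (R := R)) :=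
  Ideal.ext fun _ => mem_idealOfVars_iff

instance isPrime_idealOfVars [IsDomain R] : (idealOfVars σ R).IsPrime := by
  rw [idealOfVars_eq_ker_constantCoeff]
  exact RingHom.ker_isPrime _

theorem sub_C_constantCoeff_mem_idealOfVars (p : MvPolynomial σ R) :
    p - C (constantCoeff p) ∈ idealOfVars σ R := by
  simp [mem_idealOfVars_iff]

theorem map_idealOfVars_ne_top [Nontrivial R] {π : MvPolynomial σ R →ₐ[R] A}
    (hπ : Function.Surjective π) (hker : RingHom.ker π ≤ idealOfVars σ R) :
    (idealOfVars σ R).map π ≠ ⊤ := by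
  intro h
  have hcomap := Ideal.comap_map_of_surjective' π hπ (idealOfVars σ R)
  rw [h, Ideal.comap_top, sup_eq_left.mpr hker] at hcomap
  have hone : (1 : MvPolynomial σ R) ∈ idealOfVars σ R := hcomap ▸ Submodule.mem_top
  simp [mem_idealOfVars_iff] at hone

theorem IsHomogeneous.mem_pow_idealOfVars {φ : MvPolynomial σ R} {n : ℕ}
    (hφ : φ.IsHomogeneous n) : φ ∈ idealOfVars σ R ^ n := by
  rw [mem_pow_idealOfVars_iff]
  intro x hx
  rw [Finsupp.degree_eq_weight_one]
  exact (hφ (mem_support_iff.mp hx)).ge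

theorem IsHomogeneous.eq_zero_of_mem_pow_idealOfVars {φ : MvPolynomial σ R} {n : ℕ}
    (hφ : φ.IsHomogeneous n) (h : φ ∈ idealOfVars σ R ^ (n + 1)) : φ = 0 := by
  ext x
  by_cases hx : x.degree = n
  · exact (mem_pow_idealOfVars_iff' _ _).mp h x (by omega)
  · exact hφ.coeff_eq_zero hx

end idealOfVars

section height

variable [IsDomain R]

theorem card_le_height_ker_aeval [DecidableEq σ] (s : Finset σ) :
    (s.card : ℕ∞) ≤ (RingHom.ker
      (aeval (R := R) fun j => if j ∈ s then 0 else (X j : MvPolynomial σ R))).height := by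
  induction s using Finset.induction_on with
  | empty => simp
  | insert i s hi ih =>
    set κ : Finset σ → MvPolynomial σ R →ₐ[R] MvPolynomial σ R :=
      fun t => aeval fun j => if j ∈ t then 0 else X j
    have hcomp : κ (insert i s) = (κ (insert i s)).comp (κ s) := by
      ext j : 1
      by_cases hj : j ∈ s <;> simp [κ, hj]
    have hlt : RingHom.ker (κ s) < RingHom.ker (κ (insert i s)) := by
      refine lt_of_le_of_ne (fun p hp => ?_) fun h => ?_
      · rw [RingHom.mem_ker] at hp ⊢
        rw [hcomp, AlgHom.comp_apply, hp, map_zero]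
      · have hX : X i ∈ RingHom.ker (κ (insert i s)) := by simp [κ]
        rw [← h, RingHom.mem_ker] at hX
        simp [κ, hi, X_ne_zero] at hX
    have := RingHom.ker_isPrime (κ s)
    have := RingHom.ker_isPrime (κ (insert i s))
    rw [Finset.card_insert_of_notMem hi, Nat.cast_add, Nat.cast_one]
    exact (add_le_add_left ih 1).trans (Ideal.height_add_one_le_of_lt_of_isPrime hlt)

theorem card_le_height_idealOfVars [Fintype σ] :
    (Fintype.card σ : ℕ∞) ≤ (idealOfVars σ R).height := by
  classical
  refine (card_le_height_ker_aeval (R := R) Finset.univ).trans (Ideal.height_mono fun p hp => ?_)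
  simp only [RingHom.mem_ker, Finset.mem_univ, if_true, aeval_zero', algebraMap_eq,
    C_eq_zero] at hp
  exact mem_idealOfVars_iff.mpr hp

theorem card_le_card_of_radical_span_eq_idealOfVars [IsNoetherianRing R] [Fintype σ]
    {ι : Type*} [Fintype ι] (v : ι → MvPolynomial σ R)
    (h : (Ideal.span (Set.range v)).radical = idealOfVars σ R) :
    Fintype.card σ ≤ Fintype.card ι := by
  classical
  have hspan : Ideal.span (Set.range v) = Ideal.span ↑(Finset.univ.image v) := by simp
  obtain ⟨q, hq, -⟩ := Ideal.exists_minimalPrimes_le (h ▸ Ideal.le_radical)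
  have hmq : idealOfVars σ R ≤ q := h ▸ (hq.1.1.radical_le_iff).mpr hq.1.2
  rw [hspan] at hq
  have : (Fintype.card σ : ℕ∞) ≤ Fintype.card ι :=
    calc (Fintype.card σ : ℕ∞) ≤ (idealOfVars σ R).height := card_le_height_idealOfVars
      _ ≤ q.height := Ideal.height_mono hmq
      _ ≤ (Finset.univ.image v).card := Ideal.height_le_card_of_mem_minimalPrimes_span_finset hq
      _ ≤ Fintype.card ι := by exact_mod_cast Finset.card_image_le
  exact_mod_cast this

end height

section partialDerivatives

variable [Fintype σ]

theorem IsHomogeneous.mem_of_forall_pderiv_mem {f : MvPolynomial σ R} {d : ℕ}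
    (hf : f.IsHomogeneous d) (hd : IsUnit (d : R)) {I : Ideal (MvPolynomial σ R)}
    (h : ∀ i, pderiv i f ∈ I) : f ∈ I := by
  have hdf : d • f ∈ I := by
    rw [← hf.sum_X_mul_pderiv]
    exact Ideal.sum_mem _ fun i _ => I.mul_mem_left _ (h i)
  rwa [nsmul_eq_mul, ← map_natCast C, Ideal.unit_mul_mem_iff_mem _ (hd.map C)] at hdf

theorem IsHomogeneous.linearIndependent_pderiv {k : Type*} [Field k]
    {f : MvPolynomial σ k} {d : ℕ} (hf : f.IsHomogeneous d) (hd : (d : k) ≠ 0)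
    (hiso : (Ideal.span ({f} ∪ Set.range fun j => pderiv j f)).radical = idealOfVars σ k) :
    LinearIndependent k fun i => pderiv i f := by
  classical
  rw [linearIndependent_iff_notMem_span]
  intro i₀ hi₀
  set J := Ideal.span (Set.range fun i : {i // i ≠ i₀} => pderiv (i : σ) f)
  have hpderiv : ∀ i, pderiv i f ∈ J := by
    intro i
    by_cases hi : i = i₀
    · subst hi
      refine Submodule.span_le_restrictScalars k _ _ (Submodule.span_mono ?_ hi₀)
      rintro _ ⟨j, hj, rfl⟩
      exact ⟨⟨j, by simpa using hj⟩, rfl⟩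
    · exact Ideal.subset_span ⟨⟨i, hi⟩, rfl⟩
  have hJ : J = Ideal.span ({f} ∪ Set.range fun j => pderiv j f) := by
    refine le_antisymm (Ideal.span_mono fun _ ⟨i, hi⟩ => Or.inr ⟨i, hi⟩) (Ideal.span_le.mpr ?_)
    rintro _ (rfl | ⟨i, rfl⟩)
    · exact hf.mem_of_forall_pderiv_mem hd.isUnit hpderiv
    · exact hpderiv i
  have hcard := card_le_card_of_radical_span_eq_idealOfVars _ (hJ ▸ hiso)
  rw [Fintype.card_subtype_compl, Fintype.card_subtype_eq] at hcard
  have : 0 < Fintype.card σ := Fintype.card_pos_iff.mpr ⟨i₀⟩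
  omega

theorem IsHomogeneous.sum_constantCoeff_smul_pderiv_eq_zero
    {f : MvPolynomial σ R} {d : ℕ} (hf : f.IsHomogeneous d) (hd : d ≠ 0)
    {c : σ → MvPolynomial σ R} (hc : ∑ i, pderiv i f * c i ∈ Ideal.span {f}) :
    ∑ i, constantCoeff (c i) • pderiv i f = 0 := by
  have hhom : (∑ i, constantCoeff (c i) • pderiv i f).IsHomogeneous (d - 1) :=
    IsHomogeneous.sum _ _ _ fun i _ => by rw [smul_eq_C_mul]; exact hf.pderiv.C_mul _
  have hsplit : ∑ i, constantCoeff (c i) • pderiv i f =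
      ∑ i, pderiv i f * c i - ∑ i, pderiv i f * (c i - C (constantCoeff (c i))) := by
    rw [← Finset.sum_sub_distrib]
    exact Finset.sum_congr rfl fun i _ => by rw [smul_eq_C_mul]; ring
  have hd' : d - 1 + 1 = d := Nat.sub_add_cancel (Nat.one_le_iff_ne_zero.mpr hd)
  apply hhom.eq_zero_of_mem_pow_idealOfVars
  rw [hd', hsplit]
  refine sub_mem ((Ideal.span_singleton_le_iff_mem _).mpr hf.mem_pow_idealOfVars hc)
    (Ideal.sum_mem _ fun i _ => ?_)
  rw [← hd', pow_succ]
  exact Ideal.mul_mem_mul hf.pderiv.mem_pow_idealOfVars (sub_C_constantCoeff_mem_idealOfVars _)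

theorem _root_.KaehlerDifferential.D_algHom_eq_sum_pderiv_smul (π : MvPolynomial σ R →ₐ[R] A)
    (p : MvPolynomial σ R) :
    KaehlerDifferential.D R A (π p) =
      ∑ i, π (pderiv i p) • KaehlerDifferential.D R A (π (X i)) := by
  classical
  induction p using MvPolynomial.induction_on with
  | C a => simp [algHom_C]
  | add p q hp hq => simp [hp, hq, add_smul, Finset.sum_add_distrib]
  | mul_X p j hp =>
    simp [hp, pderiv_X, Pi.single_apply, add_smul, mul_smul, Finset.sum_add_distrib,
      Finset.smul_sum, smul_comm (π (X j)), apply_ite π, ite_smul]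

theorem range_le_of_D_X_mem {π : MvPolynomial σ R →ₐ[R] A} (hπ : Function.Surjective π)
    {I : Ideal A} (ψ : Ω[A⁄R] →ₗ[A] A)
    (h : ∀ i, ψ (KaehlerDifferential.D R A (π (X i))) ∈ I) : LinearMap.range ψ ≤ I := by
  rw [LinearMap.range_eq_map, ← KaehlerDifferential.span_range_derivation R A,
    Submodule.map_span, Submodule.span_le]
  rintro _ ⟨_, ⟨r, rfl⟩, rfl⟩
  obtain ⟨p, rfl⟩ := hπ r
  rw [KaehlerDifferential.D_algHom_eq_sum_pderiv_smul, map_sum]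
  exact Ideal.sum_mem _ fun i _ => by rw [map_smul, smul_eq_mul]; exact I.mul_mem_left _ (h i)

theorem IsHomogeneous.range_le_map_idealOfVars {k : Type*} [Field k] [Algebra k A]
    {f : MvPolynomial σ k} {d : ℕ} (hf : f.IsHomogeneous d) (hd : d ≠ 0)
    (hlin : LinearIndependent k fun i => pderiv i f) {π : MvPolynomial σ k →ₐ[k] A}
    (hπ : Function.Surjective π) (hker : RingHom.ker π = Ideal.span {f})
    (ψ : Ω[A⁄k] →ₗ[A] A) : LinearMap.range ψ ≤ (idealOfVars σ k).map π := by
  choose c hc using fun i => hπ (ψ (KaehlerDifferential.D k A (π (X i))))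
  have hπf : π f = 0 := by rw [← RingHom.mem_ker, hker]; exact Ideal.mem_span_singleton_self f
  have hsyz : ∑ i, pderiv i f * c i ∈ Ideal.span {f} := by
    rw [← hker, RingHom.mem_ker, map_sum]
    simp_rw [map_mul, hc, ← smul_eq_mul, ← map_smul, ← map_sum,
      ← KaehlerDifferential.D_algHom_eq_sum_pderiv_smul, hπf, map_zero]
  have hconst := Fintype.linearIndependent_iff.mp hlin _
    (hf.sum_constantCoeff_smul_pderiv_eq_zero hd hsyz)
  exact range_le_of_D_X_mem hπ ψ fun i =>
    hc i ▸ Ideal.mem_map_of_mem π (mem_idealOfVars_iff.mpr (hconst i))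

end partialDerivatives

end MvPolynomial

theorem PiTensorProduct.range_le_of_forall_range_le {ι R N : Type*} [Nonempty ι] [CommRing R]
    [AddCommGroup N] [Module R N] {I : Ideal R} (h : ∀ ψ : N →ₗ[R] R, LinearMap.range ψ ≤ I)
    (φ : (⨂[R] _ : ι, N) →ₗ[R] R) : LinearMap.range φ ≤ I := by
  classical
  obtain ⟨i₀⟩ := ‹Nonempty ι›
  rw [LinearMap.range_eq_map, ← PiTensorProduct.span_tprod_eq_top, Submodule.map_span,
    Submodule.span_le]
  rintro _ ⟨_, ⟨v, rfl⟩, rfl⟩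
  exact h ((φ.compMultilinearMap (PiTensorProduct.tprod R)).toLinearMap v i₀) ⟨v i₀, by simp⟩

theorem stmt7_general {k : Type*} [Field k] {n : ℕ}
    (f : MvPolynomial (Fin n) k) {d : ℕ} (hdk : (d : k) ≠ 0)
    (hhom : f.IsHomogeneous d)
    (hiso : (Ideal.span ({f} ∪ Set.range fun j => pderiv j f)).radical
      = Ideal.span (Set.range (X : Fin n → MvPolynomial (Fin n) k)))
    (R : Type*) [CommRing R] [Algebra k R]
    (e : (MvPolynomial (Fin n) k ⧸ Ideal.span {f}) ≃ₐ[k] R) :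
    ∀ q : ℕ, 1 ≤ q →
      ¬ ∃ φ : SymPow R (Ω[R⁄k]) q →ₗ[R] R, Function.Surjective φ := by
  rintro q hq ⟨φ, hφ⟩
  have hd : d ≠ 0 := by rintro rfl; exact hdk Nat.cast_zero
  let π := e.toAlgHom.comp (Ideal.Quotient.mkₐ k (Ideal.span {f}))
  have hπ : Function.Surjective π := e.surjective.comp (Ideal.Quotient.mkₐ_surjective k _)
  have hker : RingHom.ker π = Ideal.span {f} := by
    ext p
    simp [π, RingHom.mem_ker, Ideal.Quotient.eq_zero_iff_mem]
  have hΩ := hhom.range_le_map_idealOfVars hd (hhom.linearIndependent_pderiv hdk hiso) hπ hker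
  have : Nonempty (Fin q) := ⟨⟨0, hq⟩⟩
  refine map_idealOfVars_ne_top hπ (hker ▸ ?_) (eq_top_iff.mpr ?_)
  · exact (Ideal.span_singleton_le_iff_mem _).mpr
      (Ideal.pow_le_self hd hhom.mem_pow_idealOfVars)
  · rw [← LinearMap.range_eq_top.mpr hφ,
      ← LinearMap.range_comp_of_range_eq_top _ (Submodule.range_mkQ _)]
    exact PiTensorProduct.range_le_of_forall_range_le hΩ _

/-- Let `n ≥ 4` and let `f` be homogeneous of degree `d ≥ 2` with
`d` invertible in `k`, such that `R = k[x₁,…,xₙ]/(f)` is a domain with an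
isolated singularity at the origin.  Then for every `q ≥ 1` there is no
surjection `Sym^q(Ω_{R/k}) ↠ R`: the free rank of every symmetric power of the
Kähler differentials vanishes. -/
theorem stmt7 {k : Type*} [Field k] {n : ℕ} (hn : 4 ≤ n)
    (f : MvPolynomial (Fin n) k) {d : ℕ} (hd : 2 ≤ d) (hdk : (d : k) ≠ 0)
    (hhom : f.IsHomogeneous d)
    (hiso : (Ideal.span ({f} ∪ Set.range fun j => pderiv j f)).radical
      = Ideal.span (Set.range (X : Fin n → MvPolynomial (Fin n) k)))
    (R : Type*) [CommRing R] [Algebra k R] [IsDomain R]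
    (e : (MvPolynomial (Fin n) k ⧸ Ideal.span {f}) ≃ₐ[k] R) :
    ∀ q : ℕ, 1 ≤ q →
      ¬ ∃ φ : SymPow R (Ω[R⁄k]) q →ₗ[R] R, Function.Surjective φ :=
  stmt7_general f hdk hhom hiso R e
end
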